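/- arXiv:2204.12676 — 5 statements merged into one kernel-verified Lean document; each statement's English description precedes it below -/
import Mathlib

section
/- Let K ≥ 2 and let u_1, ..., u_K ∈ [0,1] satisfy max_i u_i = 1. Then there exists a collection of nonnegative scalars {r_A}, indexed by nonempty subsets A of {1,...,K}, such that (1) ∑_{A} r_A = 1, and (2) for every i, u_i = ∑_{A : i ∈ A} r_A. -/
/-!
Layer cake: for a level `t ∈ (0, 1]` let `S(t) = {i | t ≤ u i}`, and let `r_A` be the Lebesgue
measure of the levels with `S(t) = A`. These sets of levels partition `(0, 1]`, so the `r_A` sum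
to `1`; those with `i ∈ A` partition `(0, u i]`, so they sum to `u i`. No level `t ≤ 1` has
`S(t) = ∅` because some `u i` equals `1`.
-/

open Finset
open MeasureTheory

section LayerCake

variable {ι : Type*} [Fintype ι]

noncomputable def superlevelFinset (u : ι → ℝ) (t : ℝ) : Finset ι := {i | t ≤ u i}

lemma measurableSet_superlevelFinset_preimage (u : ι → ℝ) (A : Finset ι) :
    MeasurableSet (superlevelFinset u ⁻¹' {A}) := by
  have : superlevelFinset u ⁻¹' {A} = ⋂ i, {t | t ≤ u i ↔ i ∈ A} := by
    ext t; simp [superlevelFinset, Finset.ext_iff]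
  rw [this]
  refine MeasurableSet.iInter fun i => ?_
  by_cases hi : i ∈ A
  · simp only [hi, iff_true]
    exact measurableSet_Iic
  · simp only [hi, iff_false]
    exact measurableSet_Iic.compl

noncomputable def layerWeight (u : ι → ℝ) (A : Finset ι) : ℝ :=
  (volume.restrict (Set.Ioc 0 1)).real (superlevelFinset u ⁻¹' {A})

lemma sum_layerWeight (u : ι → ℝ) (𝒜 : Finset (Finset ι)) :
    ∑ A ∈ 𝒜, layerWeight u A =
      (volume.restrict (Set.Ioc 0 1)).real (superlevelFinset u ⁻¹' 𝒜) :=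
  sum_measureReal_preimage_singleton 𝒜 fun A _ => measurableSet_superlevelFinset_preimage u A

lemma layerWeight_empty (u : ι → ℝ) {i : ι} (hi : 1 ≤ u i) : layerWeight u ∅ = 0 := by
  have : superlevelFinset u ⁻¹' {∅} ∩ Set.Ioc 0 1 = ∅ := by
    refine Set.eq_empty_of_forall_notMem fun t ⟨ht_empty, ht⟩ => ?_
    have hi_mem : i ∈ superlevelFinset u t := mem_filter.2 ⟨mem_univ i, ht.2.trans hi⟩
    rw [show superlevelFinset u t = ∅ from ht_empty] at hi_mem
    exact notMem_empty i hi_mem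
  rw [layerWeight, measureReal_restrict_apply (measurableSet_superlevelFinset_preimage u ∅), this,
    measureReal_empty]

lemma sum_powerset_layerWeight (u : ι → ℝ) : ∑ A ∈ univ.powerset, layerWeight u A = 1 := by
  rw [sum_layerWeight, powerset_univ, coe_univ, Set.preimage_univ, measureReal_restrict_apply_univ]
  simp

lemma sum_layerWeight_mem [DecidableEq ι] (u : ι → ℝ) (i : ι) (h0 : 0 ≤ u i) (h1 : u i ≤ 1) :
    ∑ A ∈ univ.powerset.filter (fun A => i ∈ A), layerWeight u A = u i := by
  have : superlevelFinset u ⁻¹' ↑(univ.powerset.filter (fun A => i ∈ A)) = Set.Iic (u i) := by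
    ext t; simp [superlevelFinset]
  rw [sum_layerWeight, this, measureReal_restrict_apply measurableSet_Iic,
    Set.Iic_inter_Ioc_of_le h1, Real.volume_real_Ioc_of_le h0, sub_zero]

end LayerCake

theorem stmt0_general (K : ℕ) (u : Fin K → ℝ)
    (h0 : ∀ i, 0 ≤ u i) (h1 : ∀ i, u i ≤ 1) (hmax : ∃ i, u i = 1) :
    ∃ r : Finset (Fin K) → ℝ,
      (∀ A, 0 ≤ r A) ∧ r ∅ = 0 ∧
      (∑ A ∈ (Finset.univ : Finset (Fin K)).powerset, r A) = 1 ∧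
      ∀ i, u i =
        ∑ A ∈ (Finset.univ : Finset (Fin K)).powerset.filter (fun A => i ∈ A), r A := by
  obtain ⟨i₀, hi₀⟩ := hmax
  exact ⟨layerWeight u, fun _ => measureReal_nonneg, layerWeight_empty u hi₀.ge,
    sum_powerset_layerWeight u, fun i => (sum_layerWeight_mem u i (h0 i) (h1 i)).symm⟩

/-- Decomposition lemma: if `u_1,...,u_K ∈ [0,1]` with `max_i u_i = 1`, there exist
nonnegative scalars `r_A` indexed by nonempty subsets `A` of `{1,...,K}` with total sum `1`
and `u i = ∑_{A ∋ i} r_A`. -/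
theorem stmt0 (K : ℕ) (hK : 2 ≤ K) (u : Fin K → ℝ)
    (h0 : ∀ i, 0 ≤ u i) (h1 : ∀ i, u i ≤ 1) (hmax : ∃ i, u i = 1) :
    ∃ r : Finset (Fin K) → ℝ,
      (∀ A, 0 ≤ r A) ∧ r ∅ = 0 ∧
      (∑ A ∈ (Finset.univ : Finset (Fin K)).powerset, r A) = 1 ∧
      ∀ i, u i =
        ∑ A ∈ (Finset.univ : Finset (Fin K)).powerset.filter (fun A => i ∈ A), r A :=
  stmt0_general K u h0 h1 hmax
end

section
/- Let c : X × X → [0,∞] be lower semicontinuous on a metric space X, and suppose that whenever {x_n} is bounded and sup_n c(x_n', x_n) < ∞ then {(x_n', x_n)} is precompact. Fix a nonempty A ⊆ {1,...,K} and define c_A(x_1,...,x_K) = inf_{x'∈X} ∑_{i∈A} c(x', x_i). Then c_A is lower semicontinuous on X^K: for any sequences x_i^n → x_i (i ∈ A), c_A(x_1,...,x_K) ≤ liminf_n c_A(x_1^n,...,x_K^n). -/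
/-!
Pass to a subsequence `n_k` along which the costs `c_A(x^{n_k})` approach their liminf `L`, and
pick near-minimisers `y_k` of the defining infima. Since `x^n_{i₀}` converges for some `i₀ ∈ A`, it
is bounded, and `c(y_k, x^{n_k}_{i₀}) ≤ L + 1`; the coercivity assumption then gives a further
subsequence with `y_k → p`. Lower semicontinuity of `c` yields
`c_A(x) ≤ ∑_{i ∈ A} c(p, x_i) ≤ liminf_k ∑_{i ∈ A} c(y_k, x^{n_k}_i) ≤ L`.
-/

open Filter Topology ENNReal

theorem exists_strictMono_lt_liminf_iInf_add {Y : Type*} (g : ℕ → Y → ℝ≥0∞)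
    (hL : liminf (fun n => ⨅ y, g n y) atTop ≠ ⊤) :
    ∃ φ : ℕ → ℕ, StrictMono φ ∧ ∃ y : ℕ → Y,
      ∀ k, g (φ k) (y k) < liminf (fun n => ⨅ y, g n y) atTop + ((k : ℝ≥0∞) + 1)⁻¹ := by
  have hfreq : ∀ k : ℕ, ∃ᶠ n in atTop,
      ⨅ y, g n y < liminf (fun n => ⨅ y, g n y) atTop + ((k : ℝ≥0∞) + 1)⁻¹ := fun k =>
    frequently_lt_of_liminf_lt (by isBoundedDefault)
      (ENNReal.lt_add_right hL (by simp))
  obtain ⟨φ, hφ, hφlt⟩ := extraction_forall_of_frequently hfreq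
  choose y hy using fun k => iInf_lt_iff.mp (hφlt k)
  exact ⟨φ, hφ, y, hy⟩

theorem tendsto_add_inv_natCast_add_one (L : ℝ≥0∞) :
    Tendsto (fun n : ℕ => L + ((n : ℝ≥0∞) + 1)⁻¹) atTop (𝓝 L) := by
  simpa [Function.comp_def] using tendsto_const_nhds.add
    (ENNReal.tendsto_inv_nat_nhds_zero.comp (tendsto_add_atTop_nat 1))

theorem le_liminf_sum_of_tendsto {X ι α : Type*} [TopologicalSpace X] {c : X → X → ℝ≥0∞}
    (hc : LowerSemicontinuous fun p : X × X => c p.1 p.2) (s : Finset ι) {l : Filter α}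
    {y : α → X} {p : X} (hy : Tendsto y l (𝓝 p)) {x : α → ι → X} {xl : ι → X}
    (hx : ∀ i ∈ s, Tendsto (fun n => x n i) l (𝓝 (xl i))) :
    ∑ i ∈ s, c p (xl i) ≤ liminf (fun n => ∑ i ∈ s, c (y n) (x n i)) l := by
  set F : X × (s → X) → ℝ≥0∞ := fun z => ∑ i : s, c z.1 (z.2 i)
  have hF : LowerSemicontinuous F := lowerSemicontinuous_sum fun i _ =>
    hc.comp (continuous_fst.prodMk ((continuous_apply i).comp continuous_snd))
  have hu : Tendsto (fun n => (y n, fun i : s => x n i)) l (𝓝 (p, fun i : s => xl i)) :=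
    hy.prodMk_nhds (tendsto_pi_nhds.2 fun i => hx i i.2)
  calc ∑ i ∈ s, c p (xl i) = F (p, fun i => xl i) := (Finset.sum_coe_sort s _).symm
    _ ≤ liminf F (𝓝 (p, fun i => xl i)) := LowerSemicontinuousAt.le_liminf (hF _)
    _ ≤ liminf (fun n => F (y n, fun i => x n i)) l := liminf_le_liminf_of_le hu
    _ = liminf (fun n => ∑ i ∈ s, c (y n) (x n i)) l :=
        congrArg (liminf · l) (funext fun n => Finset.sum_coe_sort s fun i => c (y n) (x n i))

theorem stmt4_general {X : Type*} [MetricSpace X] (K : ℕ)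
    (c : X → X → ℝ≥0∞)
    (hlsc : LowerSemicontinuous (fun p : X × X => c p.1 p.2))
    (hcoer : ∀ (x x' : ℕ → X), Bornology.IsBounded (Set.range x) →
      (∃ M : ℝ≥0∞, M ≠ ⊤ ∧ ∀ n, c (x' n) (x n) ≤ M) →
      IsCompact (closure (Set.range fun n => (x' n, x n))))
    (A : Finset (Fin K)) (hA : A.Nonempty)
    (x : ℕ → Fin K → X) (xl : Fin K → X)
    (hconv : ∀ i ∈ A, Tendsto (fun n => x n i) atTop (nhds (xl i))) :
    (⨅ x' : X, ∑ i ∈ A, c x' (xl i)) ≤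
      Filter.liminf (fun n => ⨅ x' : X, ∑ i ∈ A, c x' (x n i)) atTop := by
  set L := liminf (fun n => ⨅ x' : X, ∑ i ∈ A, c x' (x n i)) atTop
  rcases eq_or_ne L ⊤ with hL | hL
  · exact hL ▸ le_top
  obtain ⟨φ, hφ, y, hy⟩ := exists_strictMono_lt_liminf_iInf_add _ hL
  obtain ⟨i₀, hi₀⟩ := hA
  have hbdd : Bornology.IsBounded (Set.range fun k => x (φ k) i₀) :=
    Metric.isBounded_range_of_tendsto _ ((hconv i₀ hi₀).comp hφ.tendsto_atTop)
  have hcost : ∀ k, c (y k) (x (φ k) i₀) ≤ L + 1 := fun k =>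
    calc c (y k) (x (φ k) i₀) ≤ ∑ i ∈ A, c (y k) (x (φ k) i) :=
          Finset.single_le_sum (f := fun i => c (y k) (x (φ k) i)) (fun _ _ => zero_le) hi₀
      _ ≤ L + 1 := (hy k).le.trans (add_le_add_right (ENNReal.inv_le_one.2 le_add_self) L)
  obtain ⟨⟨p, _⟩, -, ψ, hψ, hyx⟩ :=
    (hcoer _ y hbdd ⟨L + 1, add_ne_top.2 ⟨hL, one_ne_top⟩, hcost⟩).tendsto_subseq
      fun k => subset_closure (Set.mem_range_self k)
  have hφψ := (hφ.comp hψ).tendsto_atTop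
  calc (⨅ x' : X, ∑ i ∈ A, c x' (xl i))
      ≤ ∑ i ∈ A, c p (xl i) := iInf_le _ p
    _ ≤ liminf (fun k => ∑ i ∈ A, c (y (ψ k)) (x (φ (ψ k)) i)) atTop :=
        le_liminf_sum_of_tendsto hlsc A ((continuous_fst.tendsto _).comp hyx)
          fun i hi => (hconv i hi).comp hφψ
    _ ≤ liminf (fun k => L + ((ψ k : ℝ≥0∞) + 1)⁻¹) atTop :=
        liminf_le_liminf (Eventually.of_forall fun k => (hy (ψ k)).le)
    _ = L := ((tendsto_add_inv_natCast_add_one L).comp hψ.tendsto_atTop).liminf_eq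

/-- Lower semicontinuity of the barycentric cost `c_A` along sequences, under the
lower semicontinuity and coercivity/compactness assumptions on `c`. -/
theorem stmt4 {X : Type*} [MetricSpace X] (K : ℕ)
    (c : X → X → ℝ≥0∞)
    (hdiag : ∀ x, c x x = 0)
    (hlsc : LowerSemicontinuous (fun p : X × X => c p.1 p.2))
    (hcoer : ∀ (x x' : ℕ → X), Bornology.IsBounded (Set.range x) →
      (∃ M : ℝ≥0∞, M ≠ ⊤ ∧ ∀ n, c (x' n) (x n) ≤ M) →
      IsCompact (closure (Set.range fun n => (x' n, x n))))
    (A : Finset (Fin K)) (hA : A.Nonempty)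
    (x : ℕ → Fin K → X) (xl : Fin K → X)
    (hconv : ∀ i ∈ A, Tendsto (fun n => x n i) atTop (nhds (xl i))) :
    (⨅ x' : X, ∑ i ∈ A, c x' (xl i)) ≤
      Filter.liminf (fun n => ⨅ x' : X, ∑ i ∈ A, c x' (x n i)) atTop :=
  stmt4_general K c hlsc hcoer A hA x xl hconv
end

section
/- Under the constraints of the previous statement, the functions f_i = (max(g_i,0))^{c̄}, where g^{c̄}(x) = sup_{x'} (g(x') − c(x, x')), satisfy f_i(x) ≥ 0 for all x and ∑_{i=1}^K f_i(x) ≤ 1 for all x ∈ X. -/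
open ENNReal Finset

/-!
Nonnegativity of `f_i` comes from the choice `x' = x`, since `c x x = 0`. For the sum, the sum
of the suprema is at most the supremum over tuples `t` of `∑ i, (g_i(t_i)⁺ - c(x, t_i))`. For a
fixed tuple, the positive parts add up to `∑_{i ∈ A} g_i(t_i)` over the set `A` of indices where
`g_i(t_i) > 0`. The dual constraint for `A`, with `x` as the candidate barycentre in `c_A`,
bounds this by `1 + ∑_i c(x, t_i)`.
-/

namespace EReal

lemma iSup_add_iSup_le {ι κ : Sort*} {f : ι → EReal} {g : κ → EReal} {a : EReal}
    (h : ∀ i j, f i + g j ≤ a) : iSup f + iSup g ≤ a := by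
  refine add_le_of_forall_lt fun b hb b' hb' ↦ ?_
  obtain ⟨i, hi⟩ := lt_iSup_iff.1 hb
  obtain ⟨j, hj⟩ := lt_iSup_iff.1 hb'
  exact (add_le_add hi.le hj.le).trans (h i j)

lemma sum_iSup_le_iSup_sum {ι X : Type*} [Nonempty X] (s : Finset ι) (h : ι → X → EReal) :
    ∑ i ∈ s, ⨆ x, h i x ≤ ⨆ t : ι → X, ∑ i ∈ s, h i (t i) := by
  classical
  induction s using Finset.induction with
  | empty => simp
  | @insert j s hj ih =>
    rw [sum_insert hj]
    refine (add_le_add le_rfl ih).trans (iSup_add_iSup_le fun y t ↦ ?_)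
    refine le_iSup_of_le (Function.update t j y) (le_of_eq ?_)
    rw [sum_insert hj, Function.update_self]
    congr 1
    exact sum_congr rfl fun i hi ↦ by rw [Function.update_of_ne (ne_of_mem_of_not_mem hi hj)]

lemma sum_coe_sub_coe_ennreal {ι : Type*} (s : Finset ι) (a : ι → ℝ) (e : ι → ℝ≥0∞) :
    ∑ i ∈ s, ((a i : EReal) - e i) =
      ((∑ i ∈ s, a i : ℝ) : EReal) - ((∑ i ∈ s, e i : ℝ≥0∞) : EReal) := by
  classical
  induction s using Finset.induction with
  | empty => simp
  | @insert j s hj ih =>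
    rw [sum_insert hj, sum_insert hj, sum_insert hj, ih, coe_add, coe_ennreal_add,
      add_sub_add_comm (.inl (coe_ennreal_ne_bot _)) (.inr (coe_ennreal_ne_bot _))]

end EReal

lemma Finset.sum_max_zero_eq_sum_filter_pos {ι : Type*} (s : Finset ι) (f : ι → ℝ) :
    ∑ i ∈ s, max (f i) 0 = ∑ i ∈ s with 0 < f i, f i := by
  rw [sum_filter]
  refine sum_congr rfl fun i _ ↦ ?_
  split_ifs with h
  · exact max_eq_left h.le
  · exact max_eq_right (not_lt.1 h)

lemma sum_max_zero_le_one_add_cost {ι X : Type*} [Fintype ι] (c : X → X → ℝ≥0∞)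
    (g : ι → X → ℝ)
    (hfeas : ∀ A : Finset ι, A.Nonempty → ∀ x : ι → X,
      ((∑ i ∈ A, g i (x i) : ℝ) : EReal) ≤
        1 + (((⨅ x' : X, ∑ i ∈ A, c x' (x i)) : ℝ≥0∞) : EReal))
    (x : X) (t : ι → X) :
    ((∑ i, max (g i (t i)) 0 : ℝ) : EReal) ≤ 1 + ((∑ i, c x (t i) : ℝ≥0∞) : EReal) := by
  classical
  rw [sum_max_zero_eq_sum_filter_pos]
  obtain hA | hA := (univ.filter fun i ↦ 0 < g i (t i)).eq_empty_or_nonempty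
  · rw [hA, sum_empty, EReal.coe_zero]
    exact le_add_of_le_of_nonneg zero_le_one (EReal.coe_ennreal_nonneg _)
  · refine (hfeas _ hA t).trans (add_le_add le_rfl ?_)
    exact EReal.coe_ennreal_le_coe_ennreal_iff.2
      ((iInf_le _ x).trans (sum_le_sum_of_subset (subset_univ _)))

/-- If `g_1,...,g_K` satisfy the dual constraints `∑_{i∈A} g_i(x_i) ≤ 1 + c_A(x)`, then
`f_i = (max(g_i,0))^{c̄}` satisfies `f_i ≥ 0` and `∑_i f_i ≤ 1` pointwise. -/
theorem stmt8 {X : Type*} (K : ℕ) (c : X → X → ℝ≥0∞) (hdiag : ∀ x, c x x = 0)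
    (g : Fin K → X → ℝ)
    (hfeas : ∀ (A : Finset (Fin K)), A.Nonempty → ∀ x : Fin K → X,
      ((∑ i ∈ A, g i (x i) : ℝ) : EReal) ≤
        1 + (((⨅ x' : X, ∑ i ∈ A, c x' (x i)) : ℝ≥0∞) : EReal))
    (f : Fin K → X → EReal)
    (hf : ∀ i x, f i x =
      ⨆ x' : X, ((max (g i x') 0 : ℝ) : EReal) - ((c x x' : ℝ≥0∞) : EReal)) :
    (∀ i x, 0 ≤ f i x) ∧ ∀ x, (∑ i, f i x) ≤ 1 := by
  refine ⟨fun i x ↦ ?_, fun x ↦ ?_⟩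
  · rw [hf]
    refine le_iSup_of_le x ?_
    rw [hdiag, EReal.coe_ennreal_zero, sub_zero]
    exact_mod_cast le_max_right _ _
  · have : Nonempty X := ⟨x⟩
    simp only [hf]
    refine (EReal.sum_iSup_le_iSup_sum _ _).trans (iSup_le fun t ↦ ?_)
    rw [EReal.sum_coe_sub_coe_ennreal]
    exact EReal.sub_le_of_le_add (sum_max_zero_le_one_add_cost c g hfeas x t)
end

section
/- Let X = ℝ^2 with Euclidean distance, ε > 0, and let x_1, x_2, x_3 satisfy: d(x_1,x_2) ≤ 2ε, d(x_1,x_3) > 2ε, d(x_2,x_3) > 2ε. Let μ_i = ω_i δ_{x_i} with ω_1 ≥ ω_2 ≥ ω_3 > 0 and ω_1+ω_2+ω_3 = 1. Then the optimal value of the generalized barycenter problem, inf over λ ≥ μ̃_i (i=1,2,3) of λ(X) + ∑_i C_∞(μ_i, μ̃_i) where C_∞ is the ∞-transport cost with budget ε (i.e. C_∞(μ_i, μ̃_i) = 0 if W_∞(μ_i, μ̃_i) ≤ ε, +∞ otherwise), equals ω_1 + ω_3. -/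
open MeasureTheory ENNReal

/-! Upper bound: send the masses at `x₁` and `x₂` to their midpoint, which is within `ε` of
both, and keep `x₃`; since `ω₂ ≤ ω₁`, the measure `ω₁ δ_mid + ω₃ δ_{x₃}` dominates all three
targets. Lower bound: a finite cost forces `μ̃₁` to put mass `ω₁` on the closed `ε`-ball around
`x₁` and `μ̃₃` mass `ω₃` on the one around `x₃`; these balls are disjoint because
`d(x₁, x₃) > 2ε`, and `λ` dominates both. -/

/- The `∞`-transport cost with budget `ε`: `0` if there is a coupling of `μ` and `ν`
concentrated on pairs at distance at most `ε` (i.e. `W_∞(μ,ν) ≤ ε`), `+∞` otherwise. -/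
open Classical in
noncomputable def CinfCost {E : Type*} [MeasurableSpace E] [PseudoMetricSpace E] (ε : ℝ)
    (μ ν : Measure E) : ℝ≥0∞ :=
  if ∃ π : Measure (E × E), π.map Prod.fst = μ ∧ π.map Prod.snd = ν ∧
      π {p : E × E | ε < dist p.1 p.2} = 0 then 0 else ⊤

section

variable {E : Type*} [PseudoMetricSpace E] [MeasurableSpace E] [MeasurableSingletonClass E]
  {ε : ℝ} {w : ℝ≥0∞}

lemma cinfCost_smul_dirac_smul_dirac {x y : E} (h : dist x y ≤ ε) :
    CinfCost ε (w • Measure.dirac x) (w • Measure.dirac y) = 0 := by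
  rw [CinfCost, if_pos]
  refine ⟨w • Measure.dirac (x, y), ?_, ?_, ?_⟩
  · rw [Measure.map_smul, Measure.map_dirac' measurable_fst]
  · rw [Measure.map_smul, Measure.map_dirac' measurable_snd]
  · simp [h.not_gt]

lemma le_measure_closedBall_of_cinfCost_ne_top {x : E} {ν : Measure E}
    (h : CinfCost ε (w • Measure.dirac x) ν ≠ ⊤) : w ≤ ν (Metric.closedBall x ε) := by
  rw [CinfCost] at h
  obtain ⟨π, hfst, rfl, hfar⟩ := of_not_not fun hπ => h (if_neg hπ)
  set near := {p : E × E | dist p.1 p.2 ≤ ε}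
  have hw : w = π (Prod.fst ⁻¹' {x}) := by
    rw [← Measure.map_apply measurable_fst (measurableSet_singleton x), hfst]
    simp
  calc w ≤ π (Prod.fst ⁻¹' {x} ∩ near) + π (Prod.fst ⁻¹' {x} \ near) :=
        hw ▸ measure_le_inter_add_sdiff _ _ _
    _ = π (Prod.fst ⁻¹' {x} ∩ near) := by
        have hsub : Prod.fst ⁻¹' {x} \ near ⊆ {p | ε < dist p.1 p.2} := fun p hp => by
          simpa [near] using hp.2
        rw [measure_mono_null hsub hfar, add_zero]
    _ ≤ π (Prod.snd ⁻¹' Metric.closedBall x ε) := by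
        refine measure_mono fun p ⟨hx, hp⟩ => ?_
        simp_all [near, dist_comm]
    _ ≤ π.map Prod.snd (Metric.closedBall x ε) :=
        Measure.le_map_apply measurable_snd.aemeasurable _

end

lemma add_le_measure_univ_of_cinfCost_ne_top {E : Type*} [MetricSpace E] [MeasurableSpace E]
    [OpensMeasurableSpace E] {ε : ℝ} {a b : ℝ≥0∞} {x y : E} (hxy : 2 * ε < dist x y)
    {ν ν' lam : Measure E} (hν : ν ≤ lam) (hν' : ν' ≤ lam)
    (ha : CinfCost ε (a • Measure.dirac x) ν ≠ ⊤) (hb : CinfCost ε (b • Measure.dirac y) ν' ≠ ⊤) :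
    a + b ≤ lam Set.univ :=
  calc a + b ≤ ν (Metric.closedBall x ε) + ν' (Metric.closedBall y ε) :=
        add_le_add (le_measure_closedBall_of_cinfCost_ne_top ha)
          (le_measure_closedBall_of_cinfCost_ne_top hb)
    _ ≤ lam (Metric.closedBall x ε) + lam (Metric.closedBall y ε) := add_le_add (hν _) (hν' _)
    _ = lam (Metric.closedBall x ε ∪ Metric.closedBall y ε) :=
        (measure_union (Metric.closedBall_disjoint_closedBall (by linarith))
          Metric.isClosed_closedBall.measurableSet).symm
    _ ≤ lam Set.univ := measure_mono (Set.subset_univ _)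

theorem stmt15_general (ε : ℝ) (hε : 0 < ε)
    (x₁ x₂ x₃ : EuclideanSpace ℝ (Fin 2))
    (h12 : dist x₁ x₂ ≤ 2 * ε) (h13 : dist x₁ x₃ > 2 * ε)
    (ω : Fin 3 → ℝ≥0∞) (hw10 : ω 1 ≤ ω 0)
    (μ : Fin 3 → Measure (EuclideanSpace ℝ (Fin 2)))
    (hμ0 : μ 0 = ω 0 • Measure.dirac x₁)
    (hμ1 : μ 1 = ω 1 • Measure.dirac x₂)
    (hμ2 : μ 2 = ω 2 • Measure.dirac x₃) :
    sInf {v : ℝ≥0∞ | ∃ (lam : Measure (EuclideanSpace ℝ (Fin 2)))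
        (mt : Fin 3 → Measure (EuclideanSpace ℝ (Fin 2))),
      (∀ i, mt i ≤ lam) ∧
      v = lam Set.univ + ∑ i, CinfCost ε (μ i) (mt i)} = ω 0 + ω 2 := by
  set m := midpoint ℝ x₁ x₂
  have hm₁ : dist x₁ m ≤ ε := by rw [dist_left_midpoint]; norm_num; linarith
  have hm₂ : dist x₂ m ≤ ε := by rw [dist_right_midpoint]; norm_num; linarith
  refine le_antisymm (sInf_le ⟨ω 0 • Measure.dirac m + ω 2 • Measure.dirac x₃,
    ![ω 0 • Measure.dirac m, ω 1 • Measure.dirac m, ω 2 • Measure.dirac x₃], ?_, ?_⟩) ?_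
  · intro i
    fin_cases i
    · exact Measure.le_add_right le_rfl
    · exact Measure.le_add_right (IsOrderedSMul.smul_le_smul_right _ _ hw10 _)
    · exact Measure.le_add_left le_rfl
  · simp [Fin.sum_univ_three, hμ0, hμ1, hμ2, cinfCost_smul_dirac_smul_dirac hm₁,
      cinfCost_smul_dirac_smul_dirac hm₂, cinfCost_smul_dirac_smul_dirac (dist_self x₃ ▸ hε.le)]
  · refine le_sInf ?_
    rintro _ ⟨lam, mt, hle, rfl⟩
    rcases eq_or_ne (∑ i, CinfCost ε (μ i) (mt i)) ⊤ with htop | htop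
    · simp [htop]
    have hfin := ENNReal.sum_ne_top.mp htop
    refine le_add_right (add_le_measure_univ_of_cinfCost_ne_top h13 (hle 0) (hle 2) ?_ ?_)
    · simpa [hμ0] using hfin 0
    · simpa [hμ2] using hfin 2

/-- Case 3 of the three-point toy example: with `x₁,x₂` within distance `2ε` and `x₃` far
from both, the value of the generalized barycenter problem equals `ω₁ + ω₃`. -/
theorem stmt15 (ε : ℝ) (hε : 0 < ε)
    (x₁ x₂ x₃ : EuclideanSpace ℝ (Fin 2))
    (h12 : dist x₁ x₂ ≤ 2 * ε) (h13 : dist x₁ x₃ > 2 * ε) (h23 : dist x₂ x₃ > 2 * ε)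
    (ω : Fin 3 → ℝ≥0∞) (hw21 : ω 2 ≤ ω 1) (hw10 : ω 1 ≤ ω 0)
    (hpos : ∀ i, 0 < ω i) (hsum : ω 0 + ω 1 + ω 2 = 1)
    (μ : Fin 3 → Measure (EuclideanSpace ℝ (Fin 2)))
    (hμ0 : μ 0 = ω 0 • Measure.dirac x₁)
    (hμ1 : μ 1 = ω 1 • Measure.dirac x₂)
    (hμ2 : μ 2 = ω 2 • Measure.dirac x₃) :
    sInf {v : ℝ≥0∞ | ∃ (lam : Measure (EuclideanSpace ℝ (Fin 2)))
        (mt : Fin 3 → Measure (EuclideanSpace ℝ (Fin 2))),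
      (∀ i, mt i ≤ lam) ∧
      v = lam Set.univ + ∑ i, CinfCost ε (μ i) (mt i)} = ω 0 + ω 2 :=
  stmt15_general ε hε x₁ x₂ x₃ h12 h13 ω hw10 μ hμ0 hμ1 hμ2
end

section
/- With the setup of the three-point toy example (ε-budget ∞-OT cost), suppose all pairwise distances satisfy d(x_i,x_j) ≤ 2ε but the three closed ε-balls B̄(x_i,ε) have empty triple intersection, and ω_1 < ω_2 + ω_3. Then with α_1 = (ω_1+ω_2−ω_3)/2, α_2 = (ω_2+ω_3−ω_1)/2, α_3 = (ω_3+ω_1−ω_2)/2, we have α_i ≥ 0, α_1+α_2+α_3 = 1/2, α_i + α_j equals the appropriate pairwise masses, and the optimal adversarial classification power equals 1/2 (hence the optimal adversarial risk equals 1/2). -/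
/-! Pick a point `y_ij` in each pairwise intersection of the balls. The adversary moves the same
mass `α_k` of class `i` and of class `j` onto `y_ij` (the relations `α_k + α_l = ω_i` say that
this uses up every class); since `f_i + f_j ≤ 1` at `y_ij`, every classifier scores at most
`α₀ + α₁ + α₂ = 1/2`. Conversely, since no point lies in all three balls, a classifier can give
weight `1/2` to every class whose ball contains the point; a perturbation of finite cost keeps
each class inside its ball, so this classifier scores at least `(ω₀ + ω₁ + ω₂)/2 = 1/2`. -/

open MeasureTheory ENNReal

open Metric Set

section CinfCost

variable {E : Type*} [MeasurableSpace E] [PseudoMetricSpace E]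

theorem cinfCost_eq_zero_or_eq_top (ε : ℝ) (μ ν : Measure E) :
    CinfCost ε μ ν = 0 ∨ CinfCost ε μ ν = ⊤ := by
  unfold CinfCost
  split_ifs <;> simp

theorem cinfCost_smul_dirac_eq_zero_iff [OpensMeasurableSpace E] {ε : ℝ} {c : ℝ≥0∞} {x₀ : E}
    {ν : Measure E} :
    CinfCost ε (c • Measure.dirac x₀) ν = 0 ↔ ν univ = c ∧ ν (closedBall x₀ ε)ᶜ = 0 := by
  have hdist : ∀ p : E × E, p.1 ∈ closedBall x₀ 0 → dist p.1 p.2 = dist x₀ p.2 := by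
    intro p hp
    rw [mem_closedBall] at hp
    linarith [dist_triangle p.1 x₀ p.2, dist_triangle x₀ p.1 p.2, dist_comm p.1 x₀]
  have hfar : MeasurableSet {p : E × E | p.1 ∉ closedBall x₀ 0} :=
    measurable_fst measurableSet_closedBall.compl
  have hfar_null : (c • Measure.dirac x₀) (closedBall x₀ 0)ᶜ = 0 := by
    simp [Measure.dirac_apply' _ measurableSet_closedBall.compl]
  unfold CinfCost
  split_ifs with h
  · obtain ⟨π, hfst, rfl, hπ⟩ := h
    refine iff_of_true rfl ⟨?_, ?_⟩
    · simpa [Measure.map_apply measurable_snd .univ, Measure.map_apply measurable_fst .univ]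
        using congrArg (· univ) hfst
    rw [Measure.map_apply measurable_snd measurableSet_closedBall.compl]
    refine measure_mono_null (t := {p | ε < dist p.1 p.2} ∪ {p | p.1 ∉ closedBall x₀ 0})
      (fun p hp => ?_) (measure_union_null hπ ?_)
    · by_cases h0 : p.1 ∈ closedBall x₀ 0
      · left; simpa [hdist p h0, dist_comm] using hp
      · exact Or.inr h0
    · rwa [← hfst, Measure.map_apply measurable_fst measurableSet_closedBall.compl] at hfar_null
  · refine iff_of_false top_ne_zero fun ⟨hmass, hnull⟩ => h ⟨ν.map (Prod.mk x₀), ?_, ?_, ?_⟩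
    · rw [Measure.map_map measurable_fst measurable_prodMk_left]
      exact (Measure.map_const _ _).trans (by rw [hmass])
    · rw [Measure.map_map measurable_snd measurable_prodMk_left]
      exact Measure.map_id
    · refine measure_mono_null (t := {p | p.1 ∉ closedBall x₀ 0} ∪ Prod.snd ⁻¹' (closedBall x₀ ε)ᶜ)
        (fun p hp => ?_) (measure_union_null ?_ ?_)
      · by_cases h0 : p.1 ∈ closedBall x₀ 0
        · right; simpa [hdist p h0, dist_comm] using hp
        · exact Or.inl h0
      · rw [Measure.map_apply measurable_prodMk_left hfar]; simp
      · rwa [Measure.map_apply measurable_prodMk_left (measurable_snd measurableSet_closedBall.compl)]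

theorem mul_le_lintegral_of_cinfCost_smul_dirac_eq_zero [OpensMeasurableSpace E] {ε : ℝ}
    {c : ℝ≥0∞} {x₀ : E} {ν : Measure E} (hcost : CinfCost ε (c • Measure.dirac x₀) ν = 0)
    {g : E → ℝ≥0∞} {t : ℝ≥0∞} (hg : ∀ y ∈ closedBall x₀ ε, t ≤ g y) :
    t * c ≤ ∫⁻ y, g y ∂ν := by
  obtain ⟨hmass, hnull⟩ := cinfCost_smul_dirac_eq_zero_iff.1 hcost
  calc t * c = ∫⁻ _, t ∂ν := by rw [lintegral_const, hmass]
    _ ≤ ∫⁻ y, g y ∂ν := lintegral_mono_ae <| Filter.mem_of_superset (mem_ae_iff.2 hnull) hg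

end CinfCost

theorem ENNReal.ofReal_add_ofReal_le_one {ι : Type*} [Fintype ι] {p : ι → ℝ}
    (hp0 : ∀ i, 0 ≤ p i) (hp1 : ∑ i, p i = 1) {i j : ι} (hij : i ≠ j) :
    ENNReal.ofReal (p i) + ENNReal.ofReal (p j) ≤ 1 := by
  classical
  rw [← ENNReal.ofReal_add (hp0 i) (hp0 j), ← ENNReal.ofReal_one, ← hp1, ← Finset.sum_pair hij]
  exact ENNReal.ofReal_le_ofReal <|
    Finset.sum_le_sum_of_subset_of_nonneg (Finset.subset_univ _) fun k _ _ => hp0 k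

theorem exists_classifier_ge {E ι : Type*} [MeasurableSpace E] [Fintype ι] [Nonempty ι]
    {g : ι → E → ℝ} (hg : ∀ i, Measurable (g i)) (hg0 : ∀ i y, 0 ≤ g i y)
    (hg1 : ∀ y, ∑ i, g i y ≤ 1) :
    ∃ f : ι → E → ℝ, (∀ i, Measurable (f i)) ∧ (∀ i y, 0 ≤ f i y) ∧ (∀ y, ∑ i, f i y = 1) ∧
      ∀ i y, g i y ≤ f i y := by
  have hrest : ∀ y, 0 ≤ (1 - ∑ j, g j y) / Fintype.card ι := fun y =>
    div_nonneg (sub_nonneg.2 (hg1 y)) (Nat.cast_nonneg _)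
  refine ⟨fun i y => g i y + (1 - ∑ j, g j y) / Fintype.card ι, fun i => ?_,
    fun i y => add_nonneg (hg0 i y) (hrest y), fun y => ?_,
    fun i y => le_add_of_nonneg_right (hrest y)⟩
  · exact (hg i).add ((measurable_const.sub (Finset.measurable_sum _ fun j _ => hg j)).div_const _)
  · rw [Finset.sum_add_distrib, Finset.sum_const, Finset.card_univ, nsmul_eq_mul,
      mul_div_cancel₀ _ (Nat.cast_ne_zero.2 Fintype.card_ne_zero)]
    ring

theorem sum_indicator_inv_two_le_one {E : Type*} {s : Fin 3 → Set E}
    (hs : s 0 ∩ s 1 ∩ s 2 = ∅) (y : E) : ∑ i, (s i).indicator (fun _ => (2⁻¹ : ℝ)) y ≤ 1 := by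
  have hy : y ∉ s 0 ∩ s 1 ∩ s 2 := hs ▸ Set.notMem_empty y
  simp only [Fin.sum_univ_three, Set.indicator]
  split_ifs <;> norm_num
  exact hy ⟨⟨‹_›, ‹_›⟩, ‹_›⟩

section Game

variable {E ι : Type*} [MeasurableSpace E] [PseudoMetricSpace E] [Fintype ι]

/-- The paper's `B(f, μ̃) + C(μ, μ̃)`, with `ν = μ̃`. -/
noncomputable def adversarialPayoff (ε : ℝ) (μ ν : ι → Measure E) (f : ι → E → ℝ) : ℝ≥0∞ :=
  (∑ i, ∫⁻ y, ENNReal.ofReal (f i y) ∂(ν i)) + ∑ i, CinfCost ε (μ i) (ν i)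

/-- The paper's `B*_μ`. -/
noncomputable def classificationPower (ε : ℝ) (μ : ι → Measure E) : ℝ≥0∞ :=
  sSup {v | ∃ f : ι → E → ℝ, (∀ i, Measurable (f i)) ∧ (∀ i y, 0 ≤ f i y) ∧
    (∀ y, ∑ i, f i y = 1) ∧ v = sInf {w | ∃ ν, w = adversarialPayoff ε μ ν f}}

theorem classificationPower_le {ε : ℝ} {μ : ι → Measure E} {b : ℝ≥0∞}
    (h : ∀ f : ι → E → ℝ, (∀ i, Measurable (f i)) → (∀ i y, 0 ≤ f i y) →
      (∀ y, ∑ i, f i y = 1) → ∃ ν, adversarialPayoff ε μ ν f ≤ b) :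
    classificationPower ε μ ≤ b := by
  refine sSup_le ?_
  rintro _ ⟨f, hf, hf0, hf1, rfl⟩
  obtain ⟨ν, hν⟩ := h f hf hf0 hf1
  refine (sInf_le ?_).trans hν
  exact ⟨ν, rfl⟩

theorem le_classificationPower {ε : ℝ} {μ : ι → Measure E} {b : ℝ≥0∞} {f : ι → E → ℝ}
    (hf : ∀ i, Measurable (f i)) (hf0 : ∀ i y, 0 ≤ f i y) (hf1 : ∀ y, ∑ i, f i y = 1)
    (h : ∀ ν, b ≤ adversarialPayoff ε μ ν f) :
    b ≤ classificationPower ε μ :=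
  le_sSup_of_le ⟨f, hf, hf0, hf1, rfl⟩ <| le_sInf fun _ ⟨ν, hν⟩ => hν ▸ h ν

theorem le_adversarialPayoff_of_le_on_closedBall [OpensMeasurableSpace E] {ε t : ℝ}
    {x : ι → E} {c : ι → ℝ≥0∞} {f : ι → E → ℝ} (hf : ∀ i, ∀ y ∈ closedBall (x i) ε, t ≤ f i y)
    (ν : ι → Measure E) :
    ENNReal.ofReal t * ∑ i, c i ≤
      adversarialPayoff ε (fun i => c i • Measure.dirac (x i)) ν f := by
  unfold adversarialPayoff
  by_cases hcost : ∀ i, CinfCost ε (c i • Measure.dirac (x i)) (ν i) = 0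
  · rw [Finset.mul_sum]
    exact le_add_right <| Finset.sum_le_sum fun i _ =>
      mul_le_lintegral_of_cinfCost_smul_dirac_eq_zero (hcost i) fun y hy =>
        ENNReal.ofReal_le_ofReal (hf i y hy)
  · obtain ⟨i, hi⟩ := not_forall.1 hcost
    have htop : ∑ i, CinfCost ε (c i • Measure.dirac (x i)) (ν i) = ⊤ :=
      ENNReal.sum_eq_top.2 ⟨i, Finset.mem_univ i,
        (cinfCost_eq_zero_or_eq_top _ _ _).resolve_left hi⟩
    rw [htop, add_top]
    exact le_top

theorem classificationPower_le_of_pairwise_inter_nonempty [OpensMeasurableSpace E] {ε : ℝ}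
    {x : Fin 3 → E} (hpair : ∀ i j, i ≠ j → (closedBall (x i) ε ∩ closedBall (x j) ε).Nonempty)
    {a c : Fin 3 → ℝ≥0∞} (hc0 : c 0 = a 0 + a 2) (hc1 : c 1 = a 0 + a 1)
    (hc2 : c 2 = a 1 + a 2) :
    classificationPower ε (fun i => c i • Measure.dirac (x i)) ≤ a 0 + a 1 + a 2 := by
  refine classificationPower_le fun f hf hf0 hf1 => ?_
  obtain ⟨y₀₁, h₀₁⟩ := hpair 0 1 (by decide)
  obtain ⟨y₁₂, h₁₂⟩ := hpair 1 2 (by decide)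
  obtain ⟨y₀₂, h₀₂⟩ := hpair 0 2 (by decide)
  set ν : Fin 3 → Measure E :=
    ![a 0 • Measure.dirac y₀₁ + a 2 • Measure.dirac y₀₂,
      a 0 • Measure.dirac y₀₁ + a 1 • Measure.dirac y₁₂,
      a 1 • Measure.dirac y₁₂ + a 2 • Measure.dirac y₀₂] with hν
  have hcost : ∀ i, CinfCost ε (c i • Measure.dirac (x i)) (ν i) = 0 := by
    intro i
    fin_cases i <;> refine cinfCost_smul_dirac_eq_zero_iff.2 ⟨?_, ?_⟩ <;>
      simp_all [Measure.dirac_apply' _ measurableSet_closedBall.compl]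
  have hint : ∀ i (b b' : ℝ≥0∞) (z z' : E),
      ∫⁻ y, ENNReal.ofReal (f i y) ∂(b • Measure.dirac z + b' • Measure.dirac z') =
        b * ENNReal.ofReal (f i z) + b' * ENNReal.ofReal (f i z') := fun i _ _ _ _ => by
    simp [lintegral_add_measure, lintegral_dirac' _ (hf i).ennreal_ofReal]
  have hshare : ∀ {i j : Fin 3} (y : E), i ≠ j →
      ENNReal.ofReal (f i y) + ENNReal.ofReal (f j y) ≤ 1 := fun y =>
    ENNReal.ofReal_add_ofReal_le_one (fun i => hf0 i y) (hf1 y)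
  refine ⟨ν, ?_⟩
  calc adversarialPayoff ε (fun i => c i • Measure.dirac (x i)) ν f
      = a 0 * (ENNReal.ofReal (f 0 y₀₁) + ENNReal.ofReal (f 1 y₀₁)) +
        a 1 * (ENNReal.ofReal (f 1 y₁₂) + ENNReal.ofReal (f 2 y₁₂)) +
        a 2 * (ENNReal.ofReal (f 0 y₀₂) + ENNReal.ofReal (f 2 y₀₂)) := by
        simp only [adversarialPayoff, hcost, Finset.sum_const_zero, add_zero]
        simp only [Fin.sum_univ_three, hν, Matrix.cons_val_zero, Matrix.cons_val_one,
          Matrix.cons_val_two, Matrix.head_cons, Matrix.tail_cons, hint]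
        ring
    _ ≤ a 0 * 1 + a 1 * 1 + a 2 * 1 := by gcongr <;> exact hshare _ (by decide)
    _ = a 0 + a 1 + a 2 := by simp only [mul_one]

theorem inv_two_mul_sum_le_classificationPower [OpensMeasurableSpace E] {ε : ℝ}
    {x : Fin 3 → E} (htriple : closedBall (x 0) ε ∩ closedBall (x 1) ε ∩ closedBall (x 2) ε = ∅)
    (c : Fin 3 → ℝ≥0∞) :
    2⁻¹ * ∑ i, c i ≤ classificationPower ε (fun i => c i • Measure.dirac (x i)) := by
  obtain ⟨f, hf, hf0, hf1, hfg⟩ := exists_classifier_ge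
    (g := fun i => (closedBall (x i) ε).indicator fun _ => (2⁻¹ : ℝ))
    (fun i => measurable_const.indicator measurableSet_closedBall)
    (fun i => indicator_nonneg fun _ _ => by norm_num) (sum_indicator_inv_two_le_one htriple)
  refine le_classificationPower hf hf0 hf1 fun ν => ?_
  have hhalf : ENNReal.ofReal 2⁻¹ = 2⁻¹ := by rw [ofReal_inv_of_pos two_pos, ofReal_ofNat]
  exact hhalf ▸ le_adversarialPayoff_of_le_on_closedBall
    (fun i y hy => (hfg i y).trans_eq' (indicator_of_mem hy _)) ν

end Game

theorem stmt16_general (ε : ℝ)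
    (x : Fin 3 → EuclideanSpace ℝ (Fin 2))
    (hpair : ∀ i j, i ≠ j →
      (Metric.closedBall (x i) ε ∩ Metric.closedBall (x j) ε).Nonempty)
    (htriple : Metric.closedBall (x 0) ε ∩ Metric.closedBall (x 1) ε ∩
      Metric.closedBall (x 2) ε = ∅)
    (ω : Fin 3 → ℝ) (hw21 : ω 2 ≤ ω 1) (hw10 : ω 1 ≤ ω 0)
    (hpos : ∀ i, 0 < ω i) (hsum : ω 0 + ω 1 + ω 2 = 1)
    (hlt : ω 0 < ω 1 + ω 2)
    (μ : Fin 3 → Measure (EuclideanSpace ℝ (Fin 2)))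
    (hμ : ∀ i, μ i = ENNReal.ofReal (ω i) • Measure.dirac (x i))
    (α : Fin 3 → ℝ)
    (hα0 : α 0 = (ω 0 + ω 1 - ω 2) / 2)
    (hα1 : α 1 = (ω 1 + ω 2 - ω 0) / 2)
    (hα2 : α 2 = (ω 2 + ω 0 - ω 1) / 2)
    (Bstar : ℝ≥0∞)
    (hBstar : Bstar = sSup {v : ℝ≥0∞ | ∃ f : Fin 3 → EuclideanSpace ℝ (Fin 2) → ℝ,
      (∀ i, Measurable (f i)) ∧ (∀ i y, 0 ≤ f i y) ∧ (∀ y, ∑ i, f i y = 1) ∧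
      v = sInf {w : ℝ≥0∞ | ∃ mt : Fin 3 → Measure (EuclideanSpace ℝ (Fin 2)),
        w = (∑ i, ∫⁻ y, ENNReal.ofReal (f i y) ∂(mt i)) +
          ∑ i, CinfCost ε (μ i) (mt i)}}) :
    (∀ i, 0 ≤ α i) ∧ α 0 + α 1 + α 2 = 1 / 2 ∧
    α 0 + α 1 = ω 1 ∧ α 1 + α 2 = ω 2 ∧ α 0 + α 2 = ω 0 ∧
    Bstar = 1 / 2 ∧ (1 : ℝ≥0∞) - Bstar = 1 / 2 := by
  obtain rfl : μ = fun i => ENNReal.ofReal (ω i) • Measure.dirac (x i) := funext hμ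
  have hα : ∀ i, 0 ≤ α i := by
    intro i
    fin_cases i <;> simp only [Fin.zero_eta, Fin.mk_one, Fin.reduceFinMk, hα0, hα1, hα2] <;>
      linarith [hpos 2]
  have hα_sum : α 0 + α 1 + α 2 = 1 / 2 := by rw [hα0, hα1, hα2]; linarith
  have hα01 : α 0 + α 1 = ω 1 := by rw [hα0, hα1]; ring
  have hα12 : α 1 + α 2 = ω 2 := by rw [hα1, hα2]; ring
  have hα02 : α 0 + α 2 = ω 0 := by rw [hα0, hα2]; ring
  have hω_mass : ∑ i, ENNReal.ofReal (ω i) = 1 := by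
    rw [← ofReal_sum_of_nonneg fun i _ => (hpos i).le, Fin.sum_univ_three, hsum, ofReal_one]
  have hα_mass : ENNReal.ofReal (α 0) + ENNReal.ofReal (α 1) + ENNReal.ofReal (α 2) = 2⁻¹ := by
    rw [← ofReal_add (hα 0) (hα 1), ← ofReal_add (add_nonneg (hα 0) (hα 1)) (hα 2), hα_sum,
      one_div, ofReal_inv_of_pos two_pos, ofReal_ofNat]
  have hB : Bstar = 1 / 2 := by
    change Bstar = classificationPower ε _ at hBstar
    have hupper := classificationPower_le_of_pairwise_inter_nonempty hpair
      (a := fun i => ENNReal.ofReal (α i)) (c := fun i => ENNReal.ofReal (ω i))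
      (by rw [← ofReal_add (hα 0) (hα 2), hα02]) (by rw [← ofReal_add (hα 0) (hα 1), hα01])
      (by rw [← ofReal_add (hα 1) (hα 2), hα12])
    have hlower := inv_two_mul_sum_le_classificationPower htriple (fun i => ENNReal.ofReal (ω i))
    rw [hω_mass, mul_one] at hlower
    rw [hBstar, one_div]
    exact le_antisymm (hupper.trans_eq hα_mass) hlower
  refine ⟨hα, hα_sum, hα01, hα12, hα02, hB, ?_⟩
  rw [hB, one_div, ENNReal.one_sub_inv_two]

/-- Case 4-(i) of the three-point toy example: all pairwise distances are at most `2ε`,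
the triple intersection of the `ε`-balls is empty, and `ω₁ < ω₂ + ω₃`.  Then the
coefficients `α_i` are nonnegative, sum to `1/2`, pair up to the masses `ω`, and the
optimal adversarial classification power equals `1/2` (hence the adversarial risk is
`1/2`). -/
theorem stmt16 (ε : ℝ) (hε : 0 < ε)
    (x : Fin 3 → EuclideanSpace ℝ (Fin 2))
    (hdist : ∀ i j, dist (x i) (x j) ≤ 2 * ε)
    (hpair : ∀ i j, i ≠ j →
      (Metric.closedBall (x i) ε ∩ Metric.closedBall (x j) ε).Nonempty)
    (htriple : Metric.closedBall (x 0) ε ∩ Metric.closedBall (x 1) ε ∩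
      Metric.closedBall (x 2) ε = ∅)
    (ω : Fin 3 → ℝ) (hw21 : ω 2 ≤ ω 1) (hw10 : ω 1 ≤ ω 0)
    (hpos : ∀ i, 0 < ω i) (hsum : ω 0 + ω 1 + ω 2 = 1)
    (hlt : ω 0 < ω 1 + ω 2)
    (μ : Fin 3 → Measure (EuclideanSpace ℝ (Fin 2)))
    (hμ : ∀ i, μ i = ENNReal.ofReal (ω i) • Measure.dirac (x i))
    (α : Fin 3 → ℝ)
    (hα0 : α 0 = (ω 0 + ω 1 - ω 2) / 2)
    (hα1 : α 1 = (ω 1 + ω 2 - ω 0) / 2)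
    (hα2 : α 2 = (ω 2 + ω 0 - ω 1) / 2)
    (Bstar : ℝ≥0∞)
    (hBstar : Bstar = sSup {v : ℝ≥0∞ | ∃ f : Fin 3 → EuclideanSpace ℝ (Fin 2) → ℝ,
      (∀ i, Measurable (f i)) ∧ (∀ i y, 0 ≤ f i y) ∧ (∀ y, ∑ i, f i y = 1) ∧
      v = sInf {w : ℝ≥0∞ | ∃ mt : Fin 3 → Measure (EuclideanSpace ℝ (Fin 2)),
        w = (∑ i, ∫⁻ y, ENNReal.ofReal (f i y) ∂(mt i)) +
          ∑ i, CinfCost ε (μ i) (mt i)}}) :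
    (∀ i, 0 ≤ α i) ∧ α 0 + α 1 + α 2 = 1 / 2 ∧
    α 0 + α 1 = ω 1 ∧ α 1 + α 2 = ω 2 ∧ α 0 + α 2 = ω 0 ∧
    Bstar = 1 / 2 ∧ (1 : ℝ≥0∞) - Bstar = 1 / 2 :=
  stmt16_general ε x hpair htriple ω hw21 hw10 hpos hsum hlt μ hμ α hα0 hα1 hα2 Bstar hBstar
end
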